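/- Variance bounds for the whitened cross-covariance estimator (claims proved in Appendix A.5, 'Bounding σ²_cr'). Let (Ω, ℙ) be a probability space and let x, y : Ω → ℝᵈ be measurable maps such that ω ↦ x(ω)x(ω)ᵀ, ω ↦ x(ω)y(ω)ᵀ and ω ↦ y(ω)y(ω)ᵀ are Bochner integrable. Assume Σ_cov := 𝔼[x xᵀ] is positive definite, set Σ_cr := 𝔼[x yᵀ] and Σ_next := 𝔼[y yᵀ], and suppose: (i) ‖Σ_cov^{−1/2}·x(ω)‖ ≤ ρ_s and ‖Σ_cov^{−1/2}·y(ω)‖ ≤ ρ_{s′} for ℙ-almost every ω, and (ii) Σ_next ⪯ C·Σ_cov for some C ≥ 0. Define the centered matrix-valued random variable S(ω) := Σ_cov^{−1/2}·( x(ω)y(ω)ᵀ − Σ_cr )·Σ_cov^{−1/2}. Then ‖𝔼[S·Sᵀ]‖ ≤ ρ_{s′}² and ‖𝔼[Sᵀ·S]‖ ≤ ρ_s²·C. -/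

import Mathlib

open scoped Matrix.Norms.L2Operator
open Matrix MeasureTheory

namespace Matrix.PosSemidef
open scoped ComplexOrder

/-- The square root of a positive semidefinite matrix, as defined in Mathlib (Dec 2024). -/
noncomputable def sqrt {n 𝕜 : Type*} [Fintype n] [RCLike 𝕜] [DecidableEq n] {A : Matrix n n 𝕜}
    (hA : A.PosSemidef) : Matrix n n 𝕜 :=
  hA.1.eigenvectorUnitary.1 * diagonal (((↑) : ℝ → 𝕜) ∘ (√·) ∘ hA.1.eigenvalues) *
    (star hA.1.eigenvectorUnitary : Matrix n n 𝕜)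

end Matrix.PosSemidef

/-!
Whiten with `W = Σ_cov^{-1/2}`: with `u = W x`, `v = W y` and `P = u vᵀ` we get `𝔼[u uᵀ] = 1`,
`𝔼[v vᵀ] = W Σ_next W ≤ C • 1` and `S = P - 𝔼P`. Hence
`𝔼[S Sᵀ] = 𝔼[P Pᵀ] - 𝔼P (𝔼P)ᵀ ≤ 𝔼[P Pᵀ] = 𝔼[‖v‖² u uᵀ] ≤ ρ_{s'}² 𝔼[u uᵀ] = ρ_{s'}² • 1`, and the
same argument applied to `Sᵀ = v uᵀ - 𝔼[v uᵀ]` gives `𝔼[Sᵀ S] ≤ ρ_s² 𝔼[v vᵀ] ≤ ρ_s² C • 1`. For a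
positive semidefinite matrix, `A ≤ r • 1` bounds the operator norm by `r`.
-/

open scoped MatrixOrder ComplexOrder

namespace Matrix

section Order

variable {n : Type*} [Fintype n]

theorem isClosed_setOf_posSemidef : IsClosed {A : Matrix n n ℝ | A.PosSemidef} := by
  simp only [posSemidef_iff_dotProduct_mulVec, Set.ofPred_and, Set.ofPred_forall]
  refine (isClosed_eq continuous_id.matrix_conjTranspose continuous_id).inter
    (isClosed_iInter fun x => isClosed_le continuous_const ?_)
  fun_prop

instance : ClosedIciTopology (Matrix n n ℝ) where
  isClosed_Ici _ := isClosed_setOf_posSemidef.preimage (continuous_id.sub continuous_const)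

instance : IsOrderedModule ℝ (Matrix n n ℝ) where
  smul_le_smul_of_nonneg_left _ hc _ _ hab := by
    simpa only [le_iff, ← smul_sub] using hab.smul hc
  smul_le_smul_of_nonneg_right _ ha _ _ hcd := by
    simpa only [le_iff, ← sub_smul] using ha.posSemidef.smul (sub_nonneg.mpr hcd)

theorem norm_le_of_nonneg_of_le_smul_one [DecidableEq n] {A : Matrix n n ℝ} {r : ℝ}
    (hr : 0 ≤ r) (h0 : 0 ≤ A) (h : A ≤ r • 1) : ‖A‖ ≤ r := by
  rw [← cfc_id' ℝ A]
  refine norm_cfc_le hr fun x hx => ?_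
  rw [← Algebra.algebraMap_eq_smul_one, le_algebraMap_iff_spectrum_le] at h
  rw [Real.norm_eq_abs, abs_of_nonneg (spectrum_nonneg_of_nonneg h0 hx)]
  exact h x hx

end Order

section Sqrt

variable {n 𝕜 : Type*} [Fintype n] [DecidableEq n] [RCLike 𝕜]

theorem PosSemidef.sqrt_eq_cfcSqrt {A : Matrix n n 𝕜} (hA : A.PosSemidef) :
    hA.sqrt = CFC.sqrt A := by
  rw [CFC.sqrt_eq_cfc, cfc_nnreal_eq_real _ A, hA.1.cfc_eq]
  simp only [IsHermitian.cfc, PosSemidef.sqrt, Real.coe_sqrt]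
  congr 3 with i
  simp [hA.eigenvalues_nonneg i]

theorem PosDef.sqrt_inv_nonneg {A : Matrix n n 𝕜} (hA : A.PosDef) :
    0 ≤ hA.posSemidef.sqrt⁻¹ := by
  rw [hA.posSemidef.sqrt_eq_cfcSqrt, hA.posSemidef.inv_sqrt]
  exact CFC.sqrt_nonneg _

theorem PosDef.sqrt_inv_mul_self_mul_sqrt_inv {A : Matrix n n 𝕜} (hA : A.PosDef) :
    hA.posSemidef.sqrt⁻¹ * A * hA.posSemidef.sqrt⁻¹ = 1 := by
  rw [hA.posSemidef.sqrt_eq_cfcSqrt]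
  have hQ : IsUnit (CFC.sqrt A).det := by
    rw [← isUnit_iff_isUnit_det, CFC.isUnit_sqrt_iff A hA.posSemidef.nonneg]
    exact hA.isUnit
  have hA' := (CFC.sqrt_mul_sqrt_self A hA.posSemidef.nonneg).symm
  set Q := CFC.sqrt A
  rw [hA', ← Matrix.mul_assoc, nonsing_inv_mul _ hQ, Matrix.one_mul, mul_nonsing_inv _ hQ]

theorem PosDef.transpose_sqrt_inv {A : Matrix n n ℝ} (hA : A.PosDef) :
    (hA.posSemidef.sqrt⁻¹)ᵀ = hA.posSemidef.sqrt⁻¹ := by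
  rw [← conjTranspose_eq_transpose_of_trivial]
  exact (IsSelfAdjoint.of_nonneg hA.sqrt_inv_nonneg).star_eq

end Sqrt

section RankOne

variable {n R : Type*} [CommSemiring R]

theorem star_eq_transpose [StarRing R] [TrivialStar R] (A : Matrix n n R) : star A = Aᵀ := by
  rw [star_eq_conjTranspose, conjTranspose_eq_transpose_of_trivial]

variable [Fintype n]

theorem vecMulVec_mul_transpose (a b : n → R) :
    vecMulVec a b * (vecMulVec a b)ᵀ = (b ⬝ᵥ b) • vecMulVec a a := by
  rw [transpose_vecMulVec, vecMulVec_mul_vecMulVec, vecMulVec_smul]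

theorem mul_vecMulVec_mul_transpose (W : Matrix n n R) (a b : n → R) :
    W * vecMulVec a b * Wᵀ = vecMulVec (W *ᵥ a) (W *ᵥ b) := by
  rw [mul_vecMulVec, vecMulVec_mul, vecMul_transpose]

theorem dotProduct_self_le_sq_of_norm_le {b : n → ℝ} {ρ : ℝ} (h : ‖WithLp.toLp 2 b‖ ≤ ρ) :
    b ⬝ᵥ b ≤ ρ ^ 2 := by
  have hb : b ⬝ᵥ b = ‖WithLp.toLp 2 b‖ ^ 2 := by
    rw [← real_inner_self_eq_norm_sq, EuclideanSpace.inner_toLp_toLp, star_trivial]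
  exact hb ▸ pow_le_pow_left₀ (norm_nonneg _) h 2

end RankOne

end Matrix

section Variance

variable {Ω : Type*} [MeasurableSpace Ω] {μ : Measure Ω}

theorem integral_sub_integral_mul_star_sub_integral {A : Type*} [NormedRing A]
    [NormedAlgebra ℝ A] [CompleteSpace A] [StarRing A] [StarModule ℝ A] [ContinuousStar A]
    [IsProbabilityMeasure μ] {P : Ω → A} (hP : Integrable P μ)
    (hPP : Integrable (fun ω => P ω * star (P ω)) μ) :
    ∫ ω, (P ω - ∫ ω', P ω' ∂μ) * star (P ω - ∫ ω', P ω' ∂μ) ∂μ =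
      ∫ ω, P ω * star (P ω) ∂μ - (∫ ω, P ω ∂μ) * star (∫ ω, P ω ∂μ) := by
  set M := ∫ ω, P ω ∂μ
  have hPs : Integrable (fun ω => star (P ω)) μ :=
    (starL' ℝ : A ≃L[ℝ] A).toContinuousLinearMap.integrable_comp hP
  have hMs : ∫ ω, star (P ω) ∂μ = star M := (starL' ℝ : A ≃L[ℝ] A).integral_comp_comm P
  have expand : ∀ ω, (P ω - M) * star (P ω - M) =
      (P ω * star (P ω) - P ω * star M) - (M * star (P ω) - M * star M) := by
    intro ω
    simp only [star_sub, mul_sub, sub_mul]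
    abel
  simp_rw [expand]
  rw [integral_sub, integral_sub hPP (hP.mul_const _), integral_sub (hPs.const_mul M)
      (integrable_const _), integral_mul_const_of_integrable hP,
    integral_const_mul_of_integrable hPs, hMs, integral_const, probReal_univ, one_smul]
  · abel
  · exact hPP.sub (hP.mul_const _)
  · exact (hPs.const_mul M).sub (integrable_const _)

namespace Matrix

variable {n : Type*} [Fintype n] [DecidableEq n]

theorem integrable_transpose {F : Ω → Matrix n n ℝ} (hF : Integrable F μ) :
    Integrable (fun ω => (F ω)ᵀ) μ :=
  ((starL' ℝ : Matrix n n ℝ ≃L[ℝ] Matrix n n ℝ).toContinuousLinearMap.integrable_comp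
    hF).congr (.of_forall fun ω => star_eq_transpose (F ω))

theorem integral_transpose (F : Ω → Matrix n n ℝ) : ∫ ω, (F ω)ᵀ ∂μ = (∫ ω, F ω ∂μ)ᵀ := by
  simpa only [starL'_apply, star_eq_transpose] using
    (starL' ℝ : Matrix n n ℝ ≃L[ℝ] Matrix n n ℝ).integral_comp_comm F

theorem integral_sub_integral_mul_transpose_sub_integral_le [IsProbabilityMeasure μ]
    {P : Ω → Matrix n n ℝ} (hP : Integrable P μ)
    (hPP : Integrable (fun ω => P ω * (P ω)ᵀ) μ) :
    ∫ ω, (P ω - ∫ ω', P ω' ∂μ) * (P ω - ∫ ω', P ω' ∂μ)ᵀ ∂μ ≤ ∫ ω, P ω * (P ω)ᵀ ∂μ := by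
  simp only [← star_eq_transpose] at hPP ⊢
  rw [integral_sub_integral_mul_star_sub_integral hP hPP]
  exact sub_le_self _ (mul_star_self_nonneg _)

variable {a b : Ω → n → ℝ}

theorem integrable_vecMulVec_mulVec (W : Matrix n n ℝ)
    (hab : Integrable (fun ω => vecMulVec (a ω) (b ω)) μ) :
    Integrable (fun ω => vecMulVec (W *ᵥ a ω) (W *ᵥ b ω)) μ := by
  simpa only [mul_vecMulVec_mul_transpose] using (hab.const_mul W).mul_const Wᵀ

theorem integral_vecMulVec_mulVec (W : Matrix n n ℝ)
    (hab : Integrable (fun ω => vecMulVec (a ω) (b ω)) μ) :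
    ∫ ω, vecMulVec (W *ᵥ a ω) (W *ᵥ b ω) ∂μ = W * (∫ ω, vecMulVec (a ω) (b ω) ∂μ) * Wᵀ := by
  simp only [← mul_vecMulVec_mul_transpose]
  rw [integral_mul_const_of_integrable (hab.const_mul W), integral_const_mul_of_integrable hab]

theorem integrable_vecMulVec_mul_transpose {r : ℝ}
    (haa : Integrable (fun ω => vecMulVec (a ω) (a ω)) μ)
    (hab : AEStronglyMeasurable (fun ω => vecMulVec (a ω) (b ω)) μ)
    (hb : ∀ᵐ ω ∂μ, b ω ⬝ᵥ b ω ≤ r) :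
    Integrable (fun ω => vecMulVec (a ω) (b ω) * (vecMulVec (a ω) (b ω))ᵀ) μ := by
  refine (haa.norm.const_mul r).mono'
    (hab.mul (continuous_id.matrix_transpose.comp_aestronglyMeasurable hab)) ?_
  filter_upwards [hb] with ω hω
  have hbb : 0 ≤ b ω ⬝ᵥ b ω := by simpa using dotProduct_star_self_nonneg (b ω)
  rw [vecMulVec_mul_transpose, norm_smul, Real.norm_of_nonneg hbb]
  exact mul_le_mul_of_nonneg_right hω (norm_nonneg _)

theorem integral_vecMulVec_mul_transpose_le {r : ℝ}
    (haa : Integrable (fun ω => vecMulVec (a ω) (a ω)) μ)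
    (hab : AEStronglyMeasurable (fun ω => vecMulVec (a ω) (b ω)) μ)
    (hb : ∀ᵐ ω ∂μ, b ω ⬝ᵥ b ω ≤ r) :
    ∫ ω, vecMulVec (a ω) (b ω) * (vecMulVec (a ω) (b ω))ᵀ ∂μ ≤
      r • ∫ ω, vecMulVec (a ω) (a ω) ∂μ := by
  rw [← integral_smul]
  refine integral_mono_ae (integrable_vecMulVec_mul_transpose haa hab hb) (haa.smul r) ?_
  filter_upwards [hb] with ω hω
  rw [vecMulVec_mul_transpose]
  have hpsd : 0 ≤ vecMulVec (a ω) (a ω) := by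
    simpa using (posSemidef_vecMulVec_self_star (a ω)).nonneg
  exact smul_le_smul_of_nonneg_right hω hpsd

theorem norm_integral_mul_transpose_le [IsProbabilityMeasure μ] {S : Ω → Matrix n n ℝ}
    {ρ c : ℝ} (hc : 0 ≤ c) (haa : Integrable (fun ω => vecMulVec (a ω) (a ω)) μ)
    (hab : Integrable (fun ω => vecMulVec (a ω) (b ω)) μ)
    (ha : ∫ ω, vecMulVec (a ω) (a ω) ∂μ ≤ c • 1)
    (hb : ∀ᵐ ω ∂μ, ‖WithLp.toLp 2 (b ω)‖ ≤ ρ)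
    (hS : ∀ ω, S ω = vecMulVec (a ω) (b ω) - ∫ ω', vecMulVec (a ω') (b ω') ∂μ) :
    ‖∫ ω, S ω * (S ω)ᵀ ∂μ‖ ≤ ρ ^ 2 * c := by
  have hb' : ∀ᵐ ω ∂μ, b ω ⬝ᵥ b ω ≤ ρ ^ 2 := hb.mono fun _ => dotProduct_self_le_sq_of_norm_le
  refine norm_le_of_nonneg_of_le_smul_one (by positivity) (integral_nonneg fun ω => ?_) ?_
  · rw [Pi.zero_apply, ← star_eq_transpose]
    exact mul_star_self_nonneg _
  simp only [hS]
  calc _ ≤ ∫ ω, vecMulVec (a ω) (b ω) * (vecMulVec (a ω) (b ω))ᵀ ∂μ :=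
        integral_sub_integral_mul_transpose_sub_integral_le hab
          (integrable_vecMulVec_mul_transpose haa hab.1 hb')
    _ ≤ ρ ^ 2 • ∫ ω, vecMulVec (a ω) (a ω) ∂μ := integral_vecMulVec_mul_transpose_le haa hab.1 hb'
    _ ≤ ρ ^ 2 • c • (1 : Matrix n n ℝ) := smul_le_smul_of_nonneg_left ha (sq_nonneg ρ)
    _ = (ρ ^ 2 * c) • 1 := smul_smul _ _ _

end Matrix

end Variance

theorem stmt_19_general {Ω : Type*} [MeasurableSpace Ω] (Pr : Measure Ω) [IsProbabilityMeasure Pr]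
    (d : ℕ) (x y : Ω → Fin d → ℝ)
    (hxx : Integrable (fun ω => vecMulVec (x ω) (x ω)) Pr)
    (hxy : Integrable (fun ω => vecMulVec (x ω) (y ω)) Pr)
    (hyy : Integrable (fun ω => vecMulVec (y ω) (y ω)) Pr)
    (Scov Scr Snext : Matrix (Fin d) (Fin d) ℝ)
    (hScov : Scov = ∫ ω, vecMulVec (x ω) (x ω) ∂Pr)
    (hScr : Scr = ∫ ω, vecMulVec (x ω) (y ω) ∂Pr)
    (hSnext : Snext = ∫ ω, vecMulVec (y ω) (y ω) ∂Pr)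
    (hcov : Scov.PosDef)
    (ρs ρs' : ℝ)
    (hρs : ∀ᵐ ω ∂Pr,
      ‖(WithLp.equiv 2 (Fin d → ℝ)).symm (hcov.posSemidef.sqrt⁻¹ *ᵥ x ω)‖ ≤ ρs)
    (hρs' : ∀ᵐ ω ∂Pr,
      ‖(WithLp.equiv 2 (Fin d → ℝ)).symm (hcov.posSemidef.sqrt⁻¹ *ᵥ y ω)‖ ≤ ρs')
    (C : ℝ) (hC : 0 ≤ C) (hshift : (C • Scov - Snext).PosSemidef)
    (Sf : Ω → Matrix (Fin d) (Fin d) ℝ)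
    (hSf : ∀ ω, Sf ω =
      hcov.posSemidef.sqrt⁻¹ * (vecMulVec (x ω) (y ω) - Scr) * hcov.posSemidef.sqrt⁻¹) :
    ‖∫ ω, Sf ω * (Sf ω)ᵀ ∂Pr‖ ≤ ρs' ^ 2 ∧
      ‖∫ ω, (Sf ω)ᵀ * Sf ω ∂Pr‖ ≤ ρs ^ 2 * C := by
  set W := hcov.posSemidef.sqrt⁻¹
  have hWt : Wᵀ = W := hcov.transpose_sqrt_inv
  have hWW : W * Scov * W = 1 := hcov.sqrt_inv_mul_self_mul_sqrt_inv
  have hyx : Integrable (fun ω => vecMulVec (y ω) (x ω)) Pr := by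
    simpa only [transpose_vecMulVec] using integrable_transpose hxy
  have hu : ∫ ω, vecMulVec (W *ᵥ x ω) (W *ᵥ x ω) ∂Pr ≤ (1 : ℝ) • 1 := by
    rw [integral_vecMulVec_mulVec W hxx, ← hScov, hWt, hWW, one_smul]
  have hv : ∫ ω, vecMulVec (W *ᵥ y ω) (W *ᵥ y ω) ∂Pr ≤ C • 1 := by
    rw [integral_vecMulVec_mulVec W hyy, ← hSnext, hWt]
    simpa only [star_eq_transpose, hWt, Matrix.mul_smul, Matrix.smul_mul, hWW] using
      star_left_conjugate_le_conjugate (le_iff.mpr hshift) W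
  have hS : ∀ ω, Sf ω = vecMulVec (W *ᵥ x ω) (W *ᵥ y ω) -
      ∫ ω', vecMulVec (W *ᵥ x ω') (W *ᵥ y ω') ∂Pr := by
    intro ω
    rw [hSf, integral_vecMulVec_mulVec W hxy, ← hScr, ← mul_vecMulVec_mul_transpose, hWt,
      Matrix.mul_sub, Matrix.sub_mul]
  have hST : ∀ ω, (Sf ω)ᵀ = vecMulVec (W *ᵥ y ω) (W *ᵥ x ω) -
      ∫ ω', vecMulVec (W *ᵥ y ω') (W *ᵥ x ω') ∂Pr := by
    intro ω
    simp only [hS, transpose_sub, transpose_vecMulVec, ← integral_transpose]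
  constructor
  · exact (norm_integral_mul_transpose_le zero_le_one (integrable_vecMulVec_mulVec W hxx)
      (integrable_vecMulVec_mulVec W hxy) hu hρs' hS).trans_eq (mul_one _)
  · simpa only [transpose_transpose] using norm_integral_mul_transpose_le hC
      (integrable_vecMulVec_mulVec W hyy) (integrable_vecMulVec_mulVec W hyx) hv hρs hST

/-- Variance bounds for the whitened cross-covariance estimator (Appendix A.5,
"Bounding σ²_cr"): with almost-sure leverage bounds `ρs`, `ρs'` and
distribution-shift coefficient `C`, the centered whitened outer product
`Sf = Σ_cov^{-1/2}(x yᵀ − Σ_cr)Σ_cov^{-1/2}` satisfies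
`‖𝔼[Sf·Sfᵀ]‖ ≤ ρs'²` and `‖𝔼[Sfᵀ·Sf]‖ ≤ ρs²·C`. -/
theorem stmt_19 {Ω : Type*} [MeasurableSpace Ω] (Pr : Measure Ω) [IsProbabilityMeasure Pr]
    (d : ℕ) (x y : Ω → Fin d → ℝ) (hx : Measurable x) (hy : Measurable y)
    (hxx : Integrable (fun ω => vecMulVec (x ω) (x ω)) Pr)
    (hxy : Integrable (fun ω => vecMulVec (x ω) (y ω)) Pr)
    (hyy : Integrable (fun ω => vecMulVec (y ω) (y ω)) Pr)
    (Scov Scr Snext : Matrix (Fin d) (Fin d) ℝ)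
    (hScov : Scov = ∫ ω, vecMulVec (x ω) (x ω) ∂Pr)
    (hScr : Scr = ∫ ω, vecMulVec (x ω) (y ω) ∂Pr)
    (hSnext : Snext = ∫ ω, vecMulVec (y ω) (y ω) ∂Pr)
    (hcov : Scov.PosDef)
    (ρs ρs' : ℝ)
    (hρs : ∀ᵐ ω ∂Pr,
      ‖(WithLp.equiv 2 (Fin d → ℝ)).symm (hcov.posSemidef.sqrt⁻¹ *ᵥ x ω)‖ ≤ ρs)
    (hρs' : ∀ᵐ ω ∂Pr,
      ‖(WithLp.equiv 2 (Fin d → ℝ)).symm (hcov.posSemidef.sqrt⁻¹ *ᵥ y ω)‖ ≤ ρs')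
    (C : ℝ) (hC : 0 ≤ C) (hshift : (C • Scov - Snext).PosSemidef)
    (Sf : Ω → Matrix (Fin d) (Fin d) ℝ)
    (hSf : ∀ ω, Sf ω =
      hcov.posSemidef.sqrt⁻¹ * (vecMulVec (x ω) (y ω) - Scr) * hcov.posSemidef.sqrt⁻¹) :
    ‖∫ ω, Sf ω * (Sf ω)ᵀ ∂Pr‖ ≤ ρs' ^ 2 ∧
      ‖∫ ω, (Sf ω)ᵀ * Sf ω ∂Pr‖ ≤ ρs ^ 2 * C :=
  stmt_19_general Pr d x y hxx hxy hyy Scov Scr Snext hScov hScr hSnext hcov ρs ρs' hρs hρs' C hC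
    hshift Sf hSf
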